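/- If A is a naturally graded quasi-filiform complex Zinbiel algebra of type A_(r) (that is, with grading A = A_1 ⊕ ⋯ ⊕ A_{n−2} where either r = 1 and dim A_1 = 3, or r ≥ 2 and dim A_1 = 2 = dim A_r), then r ≤ 3. -/

import Mathlib

/-!
Write `A = A_1 ⊕ ⋯ ⊕ A_t` with `t = n - 2`. All pieces are nonzero and `dim A = n`, so
`dim A_1 = dim A_r = 2` forces `A_2, …, A_{r-1}` to be lines `ℂ e_k`; assume `r ≥ 4`.

A Zinbiel algebra is right-commutative, so for `x, y ∈ A_1` the Zinbiel identity gives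
`(y∘e_k)∘x = (y∘x)∘e_k = y∘(x∘e_k + e_k∘x)`. If `e_k∘x = c (x∘e_k)` on `A_1` and
`x∘e_k = φ(x) e_{k+1}`, this reads `φ(y) e_{k+1}∘x = (c+1) φ(x) y∘e_{k+1}`. As `φ ≠ 0`
(because `A_{k+1} = A_1∘A_k`), it follows that `e_{k+1}∘x = (c+1) x∘e_{k+1}` and that
`A_1∘e_{k+1}` lies on a single line. The Zinbiel identity on `A_1` gives `c ∈ {0, 2}` for
`k = 2`, so `c` stays a natural number and `c + 1 ≠ 0` at every step. At `k = r - 2` we get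
`dim A_r = dim A_1∘A_{r-1} ≤ 1`, a contradiction.
-/

/-- A complex Zinbiel algebra structure on the module `A`: a bilinear
multiplication satisfying `(x∘y)∘z = x∘(y∘z) + x∘(z∘y)`. -/
structure ZinbielStr (A : Type*) [AddCommGroup A] [Module ℂ A] where
  mul : A →ₗ[ℂ] A →ₗ[ℂ] A
  zinbiel : ∀ x y z : A, mul (mul x y) z = mul x (mul y z) + mul x (mul z y)

namespace ZinbielStr

variable {A : Type*} [AddCommGroup A] [Module ℂ A]

/-- `M.lcs k` is the term `A^k` of the lower central series for `k ≥ 1`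
(`A^1 = A`, `A^{k+1} = span (A ∘ A^k)`), with the convention `M.lcs 0 = ⊤`. -/
def lcs (M : ZinbielStr A) : ℕ → Submodule ℂ A
  | 0 => ⊤
  | 1 => ⊤
  | k + 2 => Submodule.span ℂ {z | ∃ a b, b ∈ lcs M (k + 1) ∧ z = M.mul a b}

/-- A Zinbiel algebra is nilpotent when some term of the lower central series vanishes. -/
def IsNilpotent (M : ZinbielStr A) : Prop := ∃ s, 1 ≤ s ∧ M.lcs s = ⊥

/-- `Ag` is a natural grading of `M` with parts `Ag 1, …, Ag t`:
the parts are independent, `A_i ∘ A_j ⊆ A_{i+j}` (with `A_k = 0` for `k > t` and `k = 0`),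
and `A^k = A_k ⊕ A_{k+1} ⊕ ⋯ ⊕ A_t` for all `1 ≤ k ≤ t`. -/
structure IsNaturalGrading (M : ZinbielStr A) (t : ℕ) (Ag : ℕ → Submodule ℂ A) : Prop where
  zero_deg : Ag 0 = ⊥
  high_deg : ∀ k, t < k → Ag k = ⊥
  indep : iSupIndep Ag
  mul_mem : ∀ i j x y, x ∈ Ag i → y ∈ Ag j → M.mul x y ∈ Ag (i + j)
  lcs_eq : ∀ k, 1 ≤ k → k ≤ t → M.lcs k = ⨆ j, ⨆ (_ : k ≤ j), Ag j

/-- An `n`-dimensional Zinbiel algebra is quasi-filiform if `A^{n-2} ≠ 0` and `A^{n-1} = 0`. -/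
def IsQuasiFiliform (M : ZinbielStr A) (n : ℕ) : Prop :=
  Module.finrank ℂ A = n ∧ M.lcs (n - 2) ≠ ⊥ ∧ M.lcs (n - 1) = ⊥

end ZinbielStr

theorem le_one_of_sum_le_card_add_two {ι : Type*} [DecidableEq ι] {s : Finset ι} {d : ι → ℕ}
    (hpos : ∀ i ∈ s, 1 ≤ d i) (hsum : ∑ i ∈ s, d i ≤ s.card + 2) {a b c : ι} (ha : a ∈ s)
    (hb : b ∈ s) (hc : c ∈ s) (hab : a ≠ b) (hac : a ≠ c) (hbc : b ≠ c) (hda : 2 ≤ d a)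
    (hdb : 2 ≤ d b) : d c ≤ 1 := by
  have hsub : {a, b, c} ⊆ s := by
    simp only [Finset.insert_subset_iff, Finset.singleton_subset_iff]
    exact ⟨ha, hb, hc⟩
  have h := Finset.sum_le_sum_of_subset (f := fun i => d i - 1) hsub
  rw [Finset.sum_tsub_distrib _ hpos, Finset.sum_const, smul_eq_mul, mul_one,
    Finset.sum_insert (by simp [hab, hac]), Finset.sum_insert (by simp [hbc]),
    Finset.sum_singleton] at h
  omega

lemma eq_zero_or_eq_two_mul {X : Type*} {φ ψ : X → ℂ} {μ : X → X → ℂ}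
    (h : ∀ x y z, μ x y * ψ z = (μ y z + μ z y) * φ x) (hμ : ∃ x y, μ x y ≠ 0) :
    (∀ z, ψ z = 0) ∨ ∀ z, ψ z = 2 * φ z := by
  refine or_iff_not_imp_left.2 fun hψ => ?_
  obtain ⟨z₀, hz₀⟩ := not_forall.1 hψ
  obtain ⟨a, b, hab⟩ := hμ
  set σ : X → ℂ := fun y => μ y z₀ + μ z₀ y
  have hfac : ∀ x y, μ x y * ψ z₀ = σ y * φ x := fun x y => h x y z₀
  have hσφ : σ b * φ a ≠ 0 := hfac a b ▸ mul_ne_zero hab hz₀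
  have E : ∀ y z, σ y * ψ z = φ y * σ z + φ z * σ y := fun y z => by
    apply mul_left_cancel₀ (right_ne_zero_of_mul hσφ)
    linear_combination (-ψ z) * hfac a y + ψ z₀ * h a y z + φ a * (hfac y z + hfac z y)
  intro z
  apply mul_left_cancel₀ (mul_ne_zero (left_ne_zero_of_mul hσφ) (left_ne_zero_of_mul hσφ))
  linear_combination σ b * E b z - σ z * E b b + σ b * E z b

theorem Submodule.exists_eq_span_singleton_of_finrank_eq_one {K V : Type*} [DivisionRing K]
    [AddCommGroup V] [Module K V] {p : Submodule K V} (h : Module.finrank K p = 1) :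
    ∃ e ≠ 0, p = K ∙ e := by
  obtain ⟨⟨e, hep⟩, he, hspan⟩ := finrank_eq_one_iff'.1 h
  refine ⟨e, fun h0 => he (Subtype.ext h0), le_antisymm (fun v hv => ?_) ?_⟩
  · obtain ⟨a, ha⟩ := hspan ⟨v, hv⟩
    exact Submodule.mem_span_singleton.2 ⟨a, congrArg Subtype.val ha⟩
  · exact (Submodule.span_singleton_le_iff_mem e p).2 hep

theorem Submodule.finrank_span_singleton_le {K V : Type*} [DivisionRing K]
    [AddCommGroup V] [Module K V] (v : V) : Module.finrank K (K ∙ v) ≤ 1 :=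
  (finrank_span_le_card {v}).trans (by simp)

theorem iSupIndep.finrank_biSup {K V ι : Type*} [DivisionRing K] [AddCommGroup V] [Module K V]
    [FiniteDimensional K V] [DecidableEq ι] {p : ι → Submodule K V} (hp : iSupIndep p)
    (s : Finset ι) : Module.finrank K ↥(⨆ i ∈ s, p i) = ∑ i ∈ s, Module.finrank K (p i) := by
  induction s using Finset.induction_on with
  | empty => simp
  | insert a s has ih =>
    have hdisj : Disjoint (p a) (⨆ i ∈ s, p i) := hp.disjoint_biSup (y := ↑s) has
    rw [Finset.iSup_insert, Finset.sum_insert has, ← ih, ← Submodule.finrank_sup_add_finrank_inf_eq,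
      hdisj.eq_bot, finrank_bot, add_zero]

namespace ZinbielStr

variable {A : Type*} [AddCommGroup A] [Module ℂ A]

lemma mul_mul_right_comm (M : ZinbielStr A) (a b c : A) :
    M.mul (M.mul a b) c = M.mul (M.mul a c) b := by
  rw [M.zinbiel, M.zinbiel, add_comm]

lemma lcs_succ (M : ZinbielStr A) {k : ℕ} (hk : 1 ≤ k) :
    M.lcs (k + 1) = Submodule.map₂ M.mul ⊤ (M.lcs k) := by
  obtain ⟨m, rfl⟩ := Nat.exists_eq_add_of_le' hk
  show M.lcs (m + 2) = _
  rw [lcs, Submodule.map₂_eq_span_image2]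
  congr 1
  ext z
  simp [Set.image2, eq_comm]

section Step

variable (M : ZinbielStr A) {S : Set A} {u w x₀ : A} {φ : A → ℂ} {c : ℂ}

lemma smul_mul_eq_smul_mul (hu : ∀ x ∈ S, M.mul u x = c • M.mul x u)
    (hφ : ∀ x ∈ S, M.mul x u = φ x • w) {x y : A} (hx : x ∈ S) (hy : y ∈ S) :
    φ y • M.mul w x = ((c + 1) * φ x) • M.mul y w :=
  calc φ y • M.mul w x = M.mul (M.mul y u) x := by rw [hφ y hy, map_smul, LinearMap.smul_apply]
    _ = M.mul y (M.mul x u) + M.mul y (M.mul u x) := by rw [mul_mul_right_comm, M.zinbiel]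
    _ = ((c + 1) * φ x) • M.mul y w := by
      rw [hu x hx, hφ x hx, map_smul, map_smul, map_smul, smul_smul, ← add_smul]
      congr 1; ring

lemma mul_eq_add_one_smul_mul (hc : c + 1 ≠ 0) (hu : ∀ x ∈ S, M.mul u x = c • M.mul x u)
    (hφ : ∀ x ∈ S, M.mul x u = φ x • w) (hx₀ : x₀ ∈ S) (hφx₀ : φ x₀ ≠ 0) {x : A} (hx : x ∈ S) :
    M.mul w x = (c + 1) • M.mul x w := by
  by_cases hφx : φ x = 0
  · have h₁ := smul_mul_eq_smul_mul M hu hφ hx hx₀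
    have h₂ := smul_mul_eq_smul_mul M hu hφ hx₀ hx
    rw [hφx, mul_zero, zero_smul, smul_eq_zero] at h₁
    rw [hφx, zero_smul, eq_comm, smul_eq_zero] at h₂
    rw [h₁.resolve_left hφx₀, h₂.resolve_left (mul_ne_zero hc hφx₀), smul_zero]
  · have h := smul_mul_eq_smul_mul M hu hφ hx hx
    rw [mul_comm, ← smul_smul] at h
    exact smul_right_injective A hφx h

lemma mul_mem_span_mul (hc : c + 1 ≠ 0) (hu : ∀ x ∈ S, M.mul u x = c • M.mul x u)
    (hφ : ∀ x ∈ S, M.mul x u = φ x • w) (hx₀ : x₀ ∈ S) (hφx₀ : φ x₀ ≠ 0) {y : A} (hy : y ∈ S) :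
    M.mul y w ∈ ℂ ∙ M.mul x₀ w := by
  have h := smul_mul_eq_smul_mul M hu hφ hx₀ hy
  rw [mul_eq_add_one_smul_mul M hc hu hφ hx₀ hφx₀ hx₀, smul_smul, mul_comm] at h
  refine Submodule.mem_span_singleton.2 ⟨φ y / φ x₀, ?_⟩
  apply smul_right_injective A (mul_ne_zero hc hφx₀)
  dsimp only
  rw [← h, smul_smul]
  congr 1
  field_simp

end Step

namespace IsNaturalGrading

variable {M : ZinbielStr A} {t : ℕ} {Ag : ℕ → Submodule ℂ A}

lemma map₂_le (hg : M.IsNaturalGrading t Ag) (i j : ℕ) :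
    Submodule.map₂ M.mul (Ag i) (Ag j) ≤ Ag (i + j) :=
  Submodule.map₂_le.2 fun x hx y hy => hg.mul_mem i j x y hx hy

lemma eq_map₂ (hg : M.IsNaturalGrading t Ag) {m : ℕ} (hm : 1 ≤ m) :
    Ag (m + 1) = Submodule.map₂ M.mul (Ag 1) (Ag m) := by
  by_cases hmt : t < m + 1
  · rw [hg.high_deg _ hmt, eq_comm, ← le_bot_iff, ← hg.high_deg _ hmt, add_comm]
    exact hg.map₂_le 1 m
  -- `A^{m+1}` is `A_1 ∘ A_m` plus terms of degree `≥ m + 2`, which meet `A_{m+1}` trivially.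
  set R := ⨆ j, ⨆ (_ : m + 2 ≤ j), Ag j
  have hgen : M.lcs (m + 1) ≤ Submodule.map₂ M.mul (Ag 1) (Ag m) ⊔ R := by
    have htop : (⊤ : Submodule ℂ A) = ⨆ i, ⨆ (_ : 1 ≤ i), Ag i := hg.lcs_eq 1 le_rfl (by omega)
    rw [lcs_succ M hm, hg.lcs_eq m hm (by omega), htop]
    simp only [Submodule.map₂_iSup_left, Submodule.map₂_iSup_right, iSup_le_iff]
    intro j hj i hi
    rcases (show i = 1 ∧ j = m ∨ m + 2 ≤ i + j by omega) with ⟨rfl, rfl⟩ | h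
    · exact le_sup_left
    · exact (hg.map₂_le i j).trans (le_sup_of_le_right (le_iSup₂_of_le (i + j) h le_rfl))
  refine (eq_of_le_of_inf_le_of_le_sup (z := R) (add_comm 1 m ▸ hg.map₂_le 1 m) ?_ ?_).symm
  · have hdisj : Disjoint (Ag (m + 1)) R := hg.indep.disjoint_biSup (y := {j | m + 2 ≤ j}) (by simp)
    rw [hdisj.eq_bot]
    exact bot_le
  · refine le_trans ?_ hgen
    rw [hg.lcs_eq (m + 1) (by omega) (by omega)]
    exact le_iSup₂_of_le (m + 1) le_rfl le_rfl

lemma exists_mul_eq_smul (hg : M.IsNaturalGrading t Ag) {i j k : ℕ} (hij : i + j = k) {e : A}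
    (he : Ag k = ℂ ∙ e) {x y : A} (hx : x ∈ Ag i) (hy : y ∈ Ag j) : ∃ a : ℂ, M.mul x y = a • e := by
  have hxy := hg.mul_mem i j x y hx hy
  rw [hij, he, Submodule.mem_span_singleton] at hxy
  obtain ⟨a, ha⟩ := hxy
  exact ⟨a, ha.symm⟩

lemma exists_mul_ne_zero (hg : M.IsNaturalGrading t Ag) {k : ℕ} (hk : 1 ≤ k)
    (hne : Ag (k + 1) ≠ ⊥) : ∃ x ∈ Ag 1, ∃ y ∈ Ag k, M.mul x y ≠ 0 := by
  by_contra! h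
  refine hne (eq_bot_iff.2 ?_)
  rw [hg.eq_map₂ hk, Submodule.map₂_le]
  intro x hx y hy
  rw [h x hx y hy]
  exact zero_mem _

lemma exists_mul_ne_zero_of_eq_span (hg : M.IsNaturalGrading t Ag) {k : ℕ} (hk : 1 ≤ k)
    (hne : Ag (k + 1) ≠ ⊥) {u : A} (hu : Ag k = ℂ ∙ u) : ∃ x ∈ Ag 1, M.mul x u ≠ 0 := by
  obtain ⟨x, hx, y, hy, hxy⟩ := hg.exists_mul_ne_zero hk hne
  rw [hu, Submodule.mem_span_singleton] at hy
  obtain ⟨a, rfl⟩ := hy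
  exact ⟨x, hx, fun h => hxy (by rw [map_smul, h, smul_zero])⟩

lemma exists_mul_eq_natCast_smul_mul {e₂ e₃ : A} (hg : M.IsNaturalGrading t Ag)
    (h₂ : Ag 2 = ℂ ∙ e₂) (he₂ : e₂ ≠ 0) (h₃ : Ag 3 = ℂ ∙ e₃) (he₃ : e₃ ≠ 0) :
    ∃ c : ℕ, ∀ x ∈ Ag 1, M.mul e₂ x = (c : ℂ) • M.mul x e₂ := by
  have he₂mem : e₂ ∈ Ag 2 := h₂ ▸ Submodule.mem_span_singleton_self e₂
  choose μ hμ using fun x y : Ag 1 => hg.exists_mul_eq_smul rfl h₂ x.2 y.2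
  choose φ hφ using fun x : Ag 1 => hg.exists_mul_eq_smul rfl h₃ x.2 he₂mem
  choose ψ hψ using fun x : Ag 1 => hg.exists_mul_eq_smul rfl h₃ he₂mem x.2
  have hrel : ∀ x y z, μ x y * ψ z = (μ y z + μ z y) * φ x := fun x y z => by
    apply smul_left_injective ℂ he₃
    have h := M.zinbiel x y z
    simp only [hμ, hψ, hφ, map_smul, LinearMap.smul_apply, smul_smul, ← add_smul] at h
    dsimp only
    rw [h, add_mul]
  have hμ0 : ∃ x y, μ x y ≠ 0 := by
    obtain ⟨x, hx, y, hy, hxy⟩ := hg.exists_mul_ne_zero le_rfl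
      (h₂ ▸ (Submodule.span_singleton_eq_bot.not.2 he₂))
    exact ⟨⟨x, hx⟩, ⟨y, hy⟩, fun h => hxy (by rw [hμ ⟨x, hx⟩ ⟨y, hy⟩, h, zero_smul])⟩
  rcases eq_zero_or_eq_two_mul hrel hμ0 with h | h
  · exact ⟨0, fun x hx => by rw [hψ ⟨x, hx⟩, h, Nat.cast_zero, zero_smul, zero_smul]⟩
  · exact ⟨2, fun x hx => by rw [hψ ⟨x, hx⟩, h, hφ ⟨x, hx⟩, smul_smul, Nat.cast_two]⟩

lemma lcs_eq_top_degree (hg : M.IsNaturalGrading t Ag) (ht : 1 ≤ t) : M.lcs t = Ag t := by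
  rw [hg.lcs_eq t ht le_rfl]
  refine le_antisymm (iSup₂_le fun k hk => ?_) (le_iSup₂_of_le t le_rfl le_rfl)
  rcases hk.eq_or_lt with rfl | h
  · exact le_rfl
  · rw [hg.high_deg k h]
    exact bot_le

lemma ne_bot (hg : M.IsNaturalGrading t Ag) (ht : M.lcs t ≠ ⊥) {k : ℕ} (hk : 1 ≤ k)
    (hkt : k ≤ t) : Ag k ≠ ⊥ := by
  intro hk0
  have hvanish : ∀ j, k ≤ j → Ag j = ⊥ := fun j hj => Nat.le_induction hk0
    (fun j hkj ih => by rw [hg.eq_map₂ (by omega), ih, Submodule.map₂_bot_right]) j hj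
  exact ht (hg.lcs_eq_top_degree (by omega) ▸ hvanish t hkt)

lemma mul_eq_add_one_smul_mul_and_finrank_le_one (hg : M.IsNaturalGrading t Ag) {k : ℕ} (hk : 1 ≤ k)
    {u w : A} (hu : Ag k = ℂ ∙ u) (hw : Ag (k + 1) = ℂ ∙ w) (hw₀ : w ≠ 0) {c : ℂ}
    (hc : c + 1 ≠ 0) (hcomm : ∀ x ∈ Ag 1, M.mul u x = c • M.mul x u) :
    (∀ x ∈ Ag 1, M.mul w x = (c + 1) • M.mul x w) ∧ Module.finrank ℂ (Ag (k + 2)) ≤ 1 := by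
  choose! φ hφ using fun x (hx : x ∈ Ag 1) =>
    hg.exists_mul_eq_smul (add_comm 1 k) hw hx (hu ▸ Submodule.mem_span_singleton_self u)
  obtain ⟨x₀, hx₀, hx₀u⟩ := hg.exists_mul_ne_zero_of_eq_span hk
    (hw ▸ Submodule.span_singleton_eq_bot.not.2 hw₀) hu
  have hφx₀ : φ x₀ ≠ 0 := fun h => hx₀u (by rw [hφ x₀ hx₀, h, zero_smul])
  refine ⟨fun x hx => mul_eq_add_one_smul_mul M hc hcomm hφ hx₀ hφx₀ hx, ?_⟩
  refine (Submodule.finrank_mono ?_).trans (Submodule.finrank_span_singleton_le (M.mul x₀ w))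
  rw [hg.eq_map₂ (by omega : 1 ≤ k + 1), hw, Submodule.map₂_span_singleton_eq_map_flip,
    Submodule.map_le_iff_le_comap]
  exact fun y hy => mul_mem_span_mul M hc hcomm hφ hx₀ hφx₀ hy

theorem finrank_le_one_of_finrank_eq_one (hg : M.IsNaturalGrading t Ag) {r : ℕ} (hr : 4 ≤ r)
    (hline : ∀ k, 2 ≤ k → k < r → Module.finrank ℂ (Ag k) = 1) :
    Module.finrank ℂ (Ag r) ≤ 1 := by
  choose! e he₀ he using fun k (hk : k ∈ Set.Ico 2 r) =>
    Submodule.exists_eq_span_singleton_of_finrank_eq_one (hline k hk.1 hk.2)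
  have hcomm : ∀ k, 2 ≤ k → k < r →
      ∃ c : ℕ, ∀ x ∈ Ag 1, M.mul (e k) x = (c : ℂ) • M.mul x (e k) := by
    intro k hk
    induction k, hk using Nat.le_induction with
    | base =>
      intro _
      exact hg.exists_mul_eq_natCast_smul_mul (he 2 ⟨le_rfl, by omega⟩) (he₀ 2 ⟨le_rfl, by omega⟩)
        (he 3 ⟨by omega, by omega⟩) (he₀ 3 ⟨by omega, by omega⟩)
    | succ k hk ih =>
      intro hkr
      obtain ⟨c, hc⟩ := ih (by omega)
      refine ⟨c + 1, fun x hx => ?_⟩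
      push_cast
      exact (hg.mul_eq_add_one_smul_mul_and_finrank_le_one (by omega) (he k ⟨hk, by omega⟩)
        (he (k + 1) ⟨by omega, hkr⟩) (he₀ (k + 1) ⟨by omega, hkr⟩)
        (Nat.cast_add_one_ne_zero c) hc).1 x hx
  obtain ⟨c, hc⟩ := hcomm (r - 2) (by omega) (by omega)
  have h := (hg.mul_eq_add_one_smul_mul_and_finrank_le_one (by omega)
    (he (r - 2) ⟨by omega, by omega⟩) (he (r - 2 + 1) ⟨by omega, by omega⟩)
    (he₀ (r - 2 + 1) ⟨by omega, by omega⟩) (Nat.cast_add_one_ne_zero c) hc).2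
  rwa [show r - 2 + 2 = r by omega] at h

end IsNaturalGrading

theorem type_le_three_general {A : Type*} [AddCommGroup A] [Module ℂ A]
    (M : ZinbielStr A) (n r : ℕ)
    (Ag : ℕ → Submodule ℂ A)
    (hqf : M.IsQuasiFiliform n) (hg : M.IsNaturalGrading (n - 2) Ag)
    (htype : (r = 1 ∧ Module.finrank ℂ (Ag 1) = 3) ∨
      (2 ≤ r ∧ Module.finrank ℂ (Ag 1) = 2 ∧ Module.finrank ℂ (Ag r) = 2)) :
    r ≤ 3 := by
  rcases htype with ⟨rfl, -⟩ | ⟨hr2, h1, hr⟩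
  · norm_num
  by_contra! hr4
  obtain ⟨hn, hne, -⟩ := hqf
  have hrt : r ≤ n - 2 := by
    by_contra! h
    rw [hg.high_deg r h, finrank_bot] at hr
    omega
  have : FiniteDimensional ℂ A := Module.finite_of_finrank_pos (by omega)
  have hpos : ∀ k ∈ Finset.Icc 1 (n - 2), 1 ≤ Module.finrank ℂ (Ag k) := fun k hk =>
    Submodule.one_le_finrank_iff.2 (hg.ne_bot hne (Finset.mem_Icc.1 hk).1 (Finset.mem_Icc.1 hk).2)
  have hsum : ∑ k ∈ Finset.Icc 1 (n - 2), Module.finrank ℂ (Ag k)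
      ≤ (Finset.Icc 1 (n - 2)).card + 2 := by
    rw [← hg.indep.finrank_biSup, Nat.card_Icc]
    exact (Submodule.finrank_le _).trans (by omega)
  have hline : ∀ k, 2 ≤ k → k < r → Module.finrank ℂ (Ag k) = 1 := fun k hk2 hkr => by
    refine le_antisymm (le_one_of_sum_le_card_add_two hpos hsum (a := 1) (b := r) ?_ ?_ ?_
      (by omega) (by omega) (by omega) h1.ge hr.ge) (hpos k ?_) <;>
      simp only [Finset.mem_Icc] <;> omega
  have := hg.finrank_le_one_of_finrank_eq_one (by omega) hline
  omega

/-- A naturally graded quasi-filiform complex Zinbiel algebra of type `A_(r)`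
(`r = 1` with `dim A_1 = 3`, or `r ≥ 2` with `dim A_1 = 2 = dim A_r`) has `r ≤ 3`. -/
theorem type_le_three {A : Type*} [AddCommGroup A] [Module ℂ A]
    [FiniteDimensional ℂ A] (M : ZinbielStr A) (n r : ℕ)
    (Ag : ℕ → Submodule ℂ A)
    (hqf : M.IsQuasiFiliform n) (hg : M.IsNaturalGrading (n - 2) Ag)
    (htype : (r = 1 ∧ Module.finrank ℂ (Ag 1) = 3) ∨
      (2 ≤ r ∧ Module.finrank ℂ (Ag 1) = 2 ∧ Module.finrank ℂ (Ag r) = 2)) :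
    r ≤ 3 :=
  type_le_three_general M n r Ag hqf hg htype

end ZinbielStr
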